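/- For every integer n ≥ 1 and all z: (z−1) · (d/dz) P_n(z; α, β) = n · ( P_n(z; α, β) − ((n+α+β)/(n+α)) · P_{n−1}(z; α, β) ). -/

import Mathlib

open Finset

/-- Pochhammer symbol `(a)_k = a (a+1) ⋯ (a+k-1)`. -/
noncomputable def poch (a : ℝ) (k : ℕ) : ℝ := ∏ i ∈ Finset.range k, (a + (i : ℝ))

/-- The Hendriksen–van Rossum polynomial `P_n(z; α, β)`. -/
noncomputable def HR (α β : ℝ) (n : ℕ) (z : ℝ) : ℝ :=
  (poch β n / poch (α + 1) n) *
    ∑ k ∈ Finset.range (n + 1),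
      poch (-(n : ℝ)) k * poch (α + 1) k /
          (poch (1 - β - (n : ℝ)) k * (Nat.factorial k : ℝ)) * z ^ k

/-- `d_m(α,β) = −(m+β)/(m+α+1)`. -/
noncomputable def dco (α β m : ℝ) : ℝ := -(m + β) / (m + α + 1)

/-- `b_m(α,β) = −m(m+α+β)/((m+α)(m+α+1))`. -/
noncomputable def bco (α β m : ℝ) : ℝ := -(m * (m + α + β)) / ((m + α) * (m + α + 1))

/-! Write `P_n(z) = ∑ₖ c_{n,k} zᵏ` (`hrCoeff`). Comparing coefficients of `zᵏ`, the claim becomes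
`k c_{n,k} - (k+1) c_{n,k+1} = n c_{n,k} - n (n+α+β)/(n+α) c_{n-1,k}`. The two Pochhammer
recursions `(a)_{k+1} = (a)_k (a+k) = a (a+1)_k` give first-order recurrences of `c_{n,k}` in `k`
and in `n`, which turn every term into a rational multiple of `c_{n,k}`; the remaining identity
of rational functions is checked directly. -/

lemma poch_succ_right (a : ℝ) (k : ℕ) : poch a (k + 1) = poch a k * (a + k) :=
  prod_range_succ _ _

lemma poch_succ_left (a : ℝ) (k : ℕ) : poch a (k + 1) = a * poch (a + 1) k := by
  rw [poch, prod_range_succ', poch, Nat.cast_zero, add_zero, mul_comm]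
  congr 1
  refine prod_congr rfl fun i _ => ?_
  push_cast
  ring

lemma poch_neg_nat_succ (n : ℕ) : poch (-(n : ℝ)) (n + 1) = 0 := by
  simp [poch_succ_right]

lemma add_int_ne_zero {a : ℝ} (ha : ∀ m : ℤ, a ≠ m) (j : ℤ) : a + j ≠ 0 :=
  fun h => ha (-j) (by push_cast; linarith)

lemma poch_ne_zero {a : ℝ} (ha : ∀ m : ℤ, a ≠ m) (k : ℕ) : poch a k ≠ 0 :=
  prod_ne_zero_iff.mpr fun i _ => by exact_mod_cast add_int_ne_zero ha i

lemma hasDerivAt_sum_mul_pow (c : ℕ → ℝ) (s : Finset ℕ) (z : ℝ) :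
    HasDerivAt (fun x => ∑ k ∈ s, c k * x ^ k) (∑ k ∈ s, c k * (k * z ^ (k - 1))) z :=
  HasDerivAt.fun_sum fun k _ => (hasDerivAt_pow k z).const_mul (c k)

lemma sub_one_mul_sum_mul_pow_pred (c : ℕ → ℝ) (n : ℕ) (hc : c (n + 1) = 0) (z : ℝ) :
    (z - 1) * ∑ k ∈ range (n + 1), c k * (k * z ^ (k - 1))
      = ∑ k ∈ range (n + 1), (k * c k - (k + 1) * c (k + 1)) * z ^ k := by
  have hmul_z : z * ∑ k ∈ range (n + 1), c k * (k * z ^ (k - 1))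
      = ∑ k ∈ range (n + 1), k * c k * z ^ k := by
    rw [mul_sum]
    refine sum_congr rfl fun k _ => ?_
    rcases k with _ | k
    · simp
    · rw [Nat.add_sub_cancel, pow_succ]
      ring
  have hshift : ∑ k ∈ range (n + 1), c k * (k * z ^ (k - 1))
      = ∑ k ∈ range (n + 1), (k + 1) * c (k + 1) * z ^ k := by
    rw [sum_range_succ', sum_range_succ _ n, hc]
    simp only [Nat.cast_zero, zero_mul, mul_zero, add_zero, Nat.add_sub_cancel, Nat.cast_succ]
    exact sum_congr rfl fun k _ => by ring
  rw [sub_mul, one_mul, hmul_z, hshift, ← sum_sub_distrib]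
  exact sum_congr rfl fun k _ => by ring

noncomputable def hrCoeff (α β : ℝ) (n k : ℕ) : ℝ :=
  poch β n / poch (α + 1) n *
    (poch (-(n : ℝ)) k * poch (α + 1) k / (poch (1 - β - (n : ℝ)) k * (Nat.factorial k : ℝ)))

lemma HR_eq_sum (α β : ℝ) (n : ℕ) :
    HR α β n = fun z => ∑ k ∈ range (n + 1), hrCoeff α β n k * z ^ k := by
  funext z
  simp only [HR, hrCoeff, mul_sum, mul_assoc]

lemma hrCoeff_self_add_one (α β : ℝ) (n : ℕ) : hrCoeff α β n (n + 1) = 0 := by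
  simp [hrCoeff, poch_neg_nat_succ]

section

variable {α β : ℝ}

lemma hrCoeff_succ_right (hβ : ∀ m : ℤ, β ≠ m) (n k : ℕ) :
    hrCoeff α β n (k + 1) * ((k + 1) * (1 - β - n + k))
      = hrCoeff α β n k * ((k - n) * (α + 1 + k)) := by
  have hβn : ∀ m : ℤ, 1 - β - n ≠ m := fun m h => hβ (1 - n - m) (by push_cast; linarith)
  have hlast : 1 - β - n + k ≠ 0 := by exact_mod_cast add_int_ne_zero hβn k
  simp only [hrCoeff, poch_succ_right, Nat.factorial_succ]
  push_cast
  field_simp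
  ring

lemma hrCoeff_succ_left (hα : ∀ m : ℤ, α ≠ m) (hβ : ∀ m : ℤ, β ≠ m) (m k : ℕ) :
    hrCoeff α β (m + 1) k * ((α + 1 + m) * (m + 1 - k))
      = hrCoeff α β m k * ((m + 1) * (β + m - k)) := by
  have hβm : ∀ j : ℤ, -β - m ≠ j := fun j h => hβ (-m - j) (by push_cast; linarith)
  have hα1 : ∀ j : ℤ, α + 1 ≠ j := fun j h => hα (j - 1) (by push_cast; linarith)
  have hnum : poch (-((m : ℝ) + 1)) k * (m + 1 - k) = (m + 1) * poch (-(m : ℝ)) k := by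
    have h := poch_succ_left (-((m : ℝ) + 1)) k
    rw [poch_succ_right, show -((m : ℝ) + 1) + 1 = -m by ring] at h
    linear_combination -h
  have hden : poch (1 - β - m) k * (β + m) = poch (-β - m) k * (β + m - k) := by
    have h := poch_succ_left (-β - m) k
    rw [poch_succ_right, show -β - m + 1 = 1 - β - m by ring] at h
    linear_combination h
  have hαm0 : α + 1 + m ≠ 0 := by exact_mod_cast add_int_ne_zero hα1 m
  have hp1 := poch_ne_zero hβm k
  have hp2 := poch_ne_zero hα1 m
  have hp3 := poch_ne_zero (a := 1 - β - m) (fun j h => hβ (1 - m - j) (by push_cast; linarith)) k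
  simp only [hrCoeff, poch_succ_right, Nat.cast_succ, show 1 - β - ((m : ℝ) + 1) = -β - m by ring]
  field_simp
  linear_combination poch β m * poch (α + 1) k * (poch (1 - β - m) k * (β + m) * hnum
    + (m + 1) * poch (-(m : ℝ)) k * hden)

lemma hrCoeff_recurrence (hα : ∀ m : ℤ, α ≠ m) (hβ : ∀ m : ℤ, β ≠ m) (m k : ℕ) :
    k * hrCoeff α β (m + 1) k - (k + 1) * hrCoeff α β (m + 1) (k + 1)
      = (m + 1) * (hrCoeff α β (m + 1) k
          - (m + 1 + α + β) / (m + 1 + α) * hrCoeff α β m k) := by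
  have hD : β + m - k ≠ 0 := by
    convert add_int_ne_zero hβ (m - k) using 1
    push_cast
    ring
  have hE : m + 1 + α ≠ 0 := by
    convert add_int_ne_zero hα (m + 1) using 1
    push_cast
    ring
  have hm1 : (m : ℝ) + 1 ≠ 0 := by positivity
  have hk := hrCoeff_succ_right (α := α) hβ (m + 1) k
  have hm := hrCoeff_succ_left hα hβ m k
  push_cast at hk
  have hnext : (k + 1) * hrCoeff α β (m + 1) (k + 1)
      = hrCoeff α β (m + 1) k * ((m + 1 - k) * (α + 1 + k)) / (β + m - k) := by
    rw [eq_div_iff hD]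
    linear_combination -hk
  have hprev : hrCoeff α β m k
      = hrCoeff α β (m + 1) k * ((m + 1 + α) * (m + 1 - k)) / ((m + 1) * (β + m - k)) := by
    rw [eq_div_iff (mul_ne_zero hm1 hD)]
    linear_combination -hm
  rw [hnext, hprev]
  field_simp
  ring

lemma sub_one_mul_deriv_HR_succ (hα : ∀ m : ℤ, α ≠ m) (hβ : ∀ m : ℤ, β ≠ m) (m : ℕ) (z : ℝ) :
    (z - 1) * deriv (HR α β (m + 1)) z
      = (m + 1) * (HR α β (m + 1) z - (m + 1 + α + β) / (m + 1 + α) * HR α β m z) := by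
  have hprev : HR α β m z = ∑ k ∈ range (m + 1 + 1), hrCoeff α β m k * z ^ k := by
    rw [sum_range_succ, hrCoeff_self_add_one, zero_mul, add_zero, HR_eq_sum]
  rw [hprev, HR_eq_sum, (hasDerivAt_sum_mul_pow _ _ z).deriv,
    sub_one_mul_sum_mul_pow_pred _ _ (hrCoeff_self_add_one α β (m + 1))]
  simp only [mul_sum, ← sum_sub_distrib]
  refine sum_congr rfl fun k _ => ?_
  rw [hrCoeff_recurrence hα hβ m k]
  ring

end

theorem stmt7_general (α β : ℝ)
    (hα : ∀ m : ℤ, α ≠ (m : ℝ)) (hβ : ∀ m : ℤ, β ≠ (m : ℝ))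
    (n : ℕ) (z : ℝ) :
    (z - 1) * deriv (HR α β n) z
      = (n : ℝ) * (HR α β n z - ((n : ℝ) + α + β) / ((n : ℝ) + α) * HR α β (n - 1) z) := by
  rcases n with _ | m
  -- for `n = 0`, `n - 1 = 0` in `ℕ`, but both sides vanish since `P_0` is constant
  · simp [HR_eq_sum]
  · push_cast
    exact sub_one_mul_deriv_HR_succ hα hβ m z

/-- `(z−1) · (d/dz) P_n(z; α, β) = n(P_n(z; α, β) − ((n+α+β)/(n+α)) P_{n−1}(z; α, β))`
for `n ≥ 1`. -/
theorem stmt7 (α β : ℝ)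
    (hα : ∀ m : ℤ, α ≠ (m : ℝ)) (hβ : ∀ m : ℤ, β ≠ (m : ℝ))
    (hαβ : ∀ m : ℤ, α + β ≠ (m : ℝ))
    (n : ℕ) (hn : 1 ≤ n) (z : ℝ) :
    (z - 1) * deriv (HR α β n) z
      = (n : ℝ) * (HR α β n z - ((n : ℝ) + α + β) / ((n : ℝ) + α) * HR α β (n - 1) z) :=
  stmt7_general α β hα hβ n z
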